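/- With Ω as above (Ω = cω + c₁ξ₁ + c₂ξ₂ + c₃ξ₃ + aθ), Ω is a symplectic form (Ω³ ≠ 0) if and only if both c - c₂ - c₃ ≠ 0 and c² - c₁² + a² + cc₂ + cc₃ + c₂c₃ ≠ 0. -/

import Mathlib

open ExteriorAlgebra

/-- The basis 1-forms α₁, β₁, α₂, β₂, γ, η of the exterior algebra over ℝ⁶. -/
noncomputable def e (i : Fin 6) : ExteriorAlgebra ℝ (Fin 6 → ℝ) :=
  ExteriorAlgebra.ι ℝ (Pi.single i 1)

noncomputable def α₁ := e 0
noncomputable def β₁ := e 1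
noncomputable def α₂ := e 2
noncomputable def β₂ := e 3
noncomputable def γ' := e 4
noncomputable def η' := e 5

/-- ω = α₁∧β₁ + α₂∧β₂ + γ∧η -/
noncomputable def ω : ExteriorAlgebra ℝ (Fin 6 → ℝ) := α₁ * β₁ + α₂ * β₂ + γ' * η'
/-- ξ₁ = α₁∧β₂ + α₂∧β₁ -/
noncomputable def ξ₁ : ExteriorAlgebra ℝ (Fin 6 → ℝ) := α₁ * β₂ + α₂ * β₁
/-- ξ₂ = α₁∧β₁ - γ∧η -/
noncomputable def ξ₂ : ExteriorAlgebra ℝ (Fin 6 → ℝ) := α₁ * β₁ - γ' * η'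
/-- ξ₃ = α₂∧β₂ - γ∧η -/
noncomputable def ξ₃ : ExteriorAlgebra ℝ (Fin 6 → ℝ) := α₂ * β₂ - γ' * η'
/-- θ = α₁∧β₂ - α₂∧β₁ -/
noncomputable def θ : ExteriorAlgebra ℝ (Fin 6 → ℝ) := α₁ * β₂ - α₂ * β₁

/-- Ω = cω + c₁ξ₁ + c₂ξ₂ + c₃ξ₃ + aθ -/
noncomputable def Ω (c c₁ c₂ c₃ a : ℝ) : ExteriorAlgebra ℝ (Fin 6 → ℝ) :=
  c • ω + c₁ • ξ₁ + c₂ • ξ₂ + c₃ • ξ₃ + a • θ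

/-!
Written in the basis, `Ω = (c + c₂) α₁β₁ + (c + c₃) α₂β₂ + (c - c₂ - c₃) γη + (c₁ + a) α₁β₂ +
(c₁ - a) α₂β₁`. Only the `γη` term contains `γ` and `η`, and the square of the remaining four
terms is `2 ((c + c₂)(c + c₃) - (c₁ + a)(c₁ - a)) α₁β₁α₂β₂`, so
`Ω³ = 6 (c - c₂ - c₃)(c² - c₁² + a² + cc₂ + cc₃ + c₂c₃) α₁β₁α₂β₂γη`. The volume form
`α₁β₁α₂β₂γη` is a basis vector of `⋀⁶ ℝ⁶`, hence nonzero.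
-/

namespace ExteriorAlgebra

variable {R M : Type*} [CommRing R] [AddCommGroup M] [Module R M]

lemma ι_mul_ι_swap (x y : M) : ι R x * ι R y = -(ι R y * ι R x) :=
  eq_neg_of_add_eq_zero_left (ι_add_mul_swap x y)

lemma ι_mul_ι_mul_swap (x y : M) (z : ExteriorAlgebra R M) :
    ι R x * (ι R y * z) = -(ι R y * (ι R x * z)) := by
  rw [← mul_assoc, ← mul_assoc, ι_mul_ι_swap x y, neg_mul]

lemma ι_mul_ι_mul_self (x : M) (z : ExteriorAlgebra R M) : ι R x * (ι R x * z) = 0 := by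
  rw [← mul_assoc, ι_sq_zero, zero_mul]

lemma ιMulti_six (v : Fin 6 → M) : ιMulti R 6 v =
    ι R (v 0) * (ι R (v 1) * (ι R (v 2) * (ι R (v 3) * (ι R (v 4) * ι R (v 5))))) := by
  rw [ιMulti_apply]
  simp [List.ofFn_succ]

theorem cube_eq_smul_ιMulti (v : Fin 6 → M) (p q r s t : R) {σ : ExteriorAlgebra R M}
    (hσ : σ = p • (ι R (v 0) * ι R (v 1)) + q • (ι R (v 2) * ι R (v 3)) +
      r • (ι R (v 4) * ι R (v 5)) + s • (ι R (v 0) * ι R (v 3)) + t • (ι R (v 2) * ι R (v 1))) :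
    σ * σ * σ = (6 * r * (p * q - s * t)) • ιMulti R 6 v := by
  rw [hσ, ιMulti_six]
  -- Expand and sort every monomial in `ι R (v i)` by increasing index; the guard `j < i`
  -- keeps the anticommutation rules from looping.
  simp +decide only [mul_add, add_mul, smul_mul_assoc, mul_smul_comm, mul_assoc, smul_smul,
    ι_sq_zero, ι_mul_ι_mul_self, mul_zero, smul_zero, add_zero, zero_add, neg_mul, mul_neg,
    smul_neg, neg_neg, neg_zero,
    fun (i j : Fin 6) (_ : j < i) => ι_mul_ι_swap (R := R) (v i) (v j),
    fun (i j : Fin 6) (_ : j < i) z => ι_mul_ι_mul_swap (R := R) (v i) (v j) z]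
  module

theorem ιMulti_basis_ne_zero [Nontrivial R] {n : ℕ} (b : Module.Basis (Fin n) R M) :
    ιMulti R n b ≠ 0 := by
  have h := (b.exteriorPower n).ne_zero (Set.powersetCard.ofFinEmbEquiv (RelEmbedding.refl _))
  rw [exteriorPower.basis_apply, exteriorPower.ιMulti_family, Equiv.symm_apply_apply] at h
  exact fun h0 => h (Subtype.ext h0)

end ExteriorAlgebra

lemma Ω_eq (c c₁ c₂ c₃ a : ℝ) : Ω c c₁ c₂ c₃ a =
    (c + c₂) • (e 0 * e 1) + (c + c₃) • (e 2 * e 3) + (c - c₂ - c₃) • (e 4 * e 5) +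
      (c₁ + a) • (e 0 * e 3) + (c₁ - a) • (e 2 * e 1) := by
  simp only [Ω, ω, ξ₁, ξ₂, ξ₃, θ, α₁, β₁, α₂, β₂, γ', η']
  module

theorem Ω_cube (c c₁ c₂ c₃ a : ℝ) : Ω c c₁ c₂ c₃ a * Ω c c₁ c₂ c₃ a * Ω c c₁ c₂ c₃ a =
    (6 * (c - c₂ - c₃) * (c ^ 2 - c₁ ^ 2 + a ^ 2 + c * c₂ + c * c₃ + c₂ * c₃)) •
      ιMulti ℝ 6 (Pi.basisFun ℝ (Fin 6)) := by
  have he (i : Fin 6) : e i = ι ℝ (Pi.basisFun ℝ (Fin 6) i) := by simp [e]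
  rw [cube_eq_smul_ιMulti _ _ _ _ _ _ (by simpa only [he] using Ω_eq c c₁ c₂ c₃ a)]
  congr 1
  ring

/-- Ω is symplectic (Ω³ ≠ 0) iff c - c₂ - c₃ ≠ 0 and
c² - c₁² + a² + cc₂ + cc₃ + c₂c₃ ≠ 0. -/
theorem stmt10 (c c₁ c₂ c₃ a : ℝ) :
    Ω c c₁ c₂ c₃ a * Ω c c₁ c₂ c₃ a * Ω c c₁ c₂ c₃ a ≠ 0
      ↔ (c - c₂ - c₃ ≠ 0 ∧ c ^ 2 - c₁ ^ 2 + a ^ 2 + c * c₂ + c * c₃ + c₂ * c₃ ≠ 0) := by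
  rw [Ω_cube, smul_ne_zero_iff_left (ιMulti_basis_ne_zero _)]
  simp
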